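/- Duality identity relating the estimator to the primal and dual energy functionals (Section 4.1): Let (v, cv) and (τ, cτ) be curl pairs and f square-ν-integrable, and assume the integration-by-parts identity ∫ τ·cv dν = ∫ cτ·v dν. Then 2 ( J(v) − J*(τ) ) = ∫ μ⁻¹|μ τ − cv|² dν + ∫ β⁻¹|cτ + β v − f|² dν, where J(v) := ½ ∫ (μ⁻¹|cv|² + β|v|²) dν − ∫ f·v dν and J*(τ) := −½ ∫ μ|τ|² dν − ½ ∫ β⁻¹|f − cτ|² dν. -/

import Mathlib

open MeasureTheory RealInnerProductSpace

/-! Pointwise, `w⁻¹ ‖w a - b‖² = w ‖a‖² - 2 ⟪a, b⟫ + w⁻¹ ‖b‖²` for `w ≠ 0`. Applied with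
`(μ, τ, cv)` and with `(β, v, f - cτ)` and integrated, this expands the right-hand side into the
energy terms plus the cross terms `-2 ∫ τ·cv` and `2 ∫ cτ·v`, which cancel by the
integration-by-parts identity. -/

theorem norm_le_and_norm_inv_le_of_mem_Icc {c C w : ℝ} (hc : 0 < c) (hw : c ≤ w ∧ w ≤ C) :
    ‖w‖ ≤ C ∧ ‖w⁻¹‖ ≤ c⁻¹ := by
  have hw_pos : 0 < w := hc.trans_le hw.1
  rw [Real.norm_of_nonneg hw_pos.le, Real.norm_of_nonneg (inv_nonneg.2 hw_pos.le)]
  exact ⟨hw.2, inv_anti₀ hc hw.1⟩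

theorem inv_mul_norm_smul_sub_sq {E : Type*} [NormedAddCommGroup E] [InnerProductSpace ℝ E]
    {w : ℝ} (hw : w ≠ 0) (a b : E) :
    w⁻¹ * ‖w • a - b‖ ^ 2 = w * ‖a‖ ^ 2 - 2 * ⟪a, b⟫ + w⁻¹ * ‖b‖ ^ 2 := by
  rw [norm_sub_sq_real, norm_smul, real_inner_smul_left, Real.norm_eq_abs, mul_pow, sq_abs]
  field_simp

section
variable {Ω E : Type*} [MeasurableSpace Ω] {ν : Measure Ω} [NormedAddCommGroup E]

theorem MeasureTheory.MemLp.integrable_inner [InnerProductSpace ℝ E] {f g : Ω → E}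
    (hf : MemLp f 2 ν) (hg : MemLp g 2 ν) : Integrable (fun x => ⟪f x, g x⟫) ν := by
  refine (L2.integrable_inner (𝕜 := ℝ) (hf.toLp f) (hg.toLp g)).congr ?_
  filter_upwards [hf.coeFn_toLp, hg.coeFn_toLp] with x hfx hgx
  rw [hfx, hgx]

theorem MeasureTheory.MemLp.integrable_mul_norm_sq {f : Ω → E} {w : Ω → ℝ} {C : ℝ}
    (hf : MemLp f 2 ν) (hwm : AEStronglyMeasurable w ν) (hw : ∀ᵐ x ∂ν, ‖w x‖ ≤ C) :
    Integrable (fun x => w x * ‖f x‖ ^ 2) ν :=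
  hf.norm.integrable_sq.bdd_mul hwm hw

theorem integral_inv_mul_norm_smul_sub_sq [InnerProductSpace ℝ E] {w : Ω → ℝ} {c C : ℝ}
    (hc : 0 < c) (hwm : AEStronglyMeasurable w ν) (hw : ∀ᵐ x ∂ν, c ≤ w x ∧ w x ≤ C)
    {f g : Ω → E} (hf : MemLp f 2 ν) (hg : MemLp g 2 ν) :
    ∫ x, (w x)⁻¹ * ‖w x • f x - g x‖ ^ 2 ∂ν
      = ∫ x, w x * ‖f x‖ ^ 2 ∂ν - 2 * ∫ x, ⟪f x, g x⟫ ∂ν + ∫ x, (w x)⁻¹ * ‖g x‖ ^ 2 ∂ν := by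
  have hw_norm := hw.mono fun x hx => norm_le_and_norm_inv_le_of_mem_Icc hc hx
  have hf_int := hf.integrable_mul_norm_sq hwm (hw_norm.mono fun x hx => hx.1)
  have hg_int := hg.integrable_mul_norm_sq (w := fun x => (w x)⁻¹) hwm.inv₀
    (hw_norm.mono fun x hx => hx.2)
  have hfg_int : Integrable (fun x => 2 * ⟪f x, g x⟫) ν := (hf.integrable_inner hg).const_mul 2
  have hdiff_int : Integrable (fun x => w x * ‖f x‖ ^ 2 - 2 * ⟪f x, g x⟫) ν :=
    hf_int.sub hfg_int
  have hw_ne : ∀ᵐ x ∂ν, w x ≠ 0 := hw.mono fun x hx => (hc.trans_le hx.1).ne'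
  rw [integral_congr_ae (hw_ne.mono fun x hx => inv_mul_norm_smul_sub_sq hx (f x) (g x)),
    integral_add hdiff_int hg_int, integral_sub hf_int hfg_int, integral_const_mul]

end

theorem duality_identity_estimator_general
    {Ω : Type*} [MeasurableSpace Ω] (ν : MeasureTheory.Measure Ω)
    (μ β : Ω → ℝ) (m₁ m₂ b₁ b₂ : ℝ)
    (hm₁ : 0 < m₁) (hb₁ : 0 < b₁)
    (hμmeas : Measurable μ) (hβmeas : Measurable β)
    (hμbd : ∀ᵐ x ∂ν, m₁ ≤ μ x ∧ μ x ≤ m₂)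
    (hβbd : ∀ᵐ x ∂ν, b₁ ≤ β x ∧ β x ≤ b₂)
    (v cv τ cτ f : Ω → EuclideanSpace ℝ (Fin 3))
    (hv : MemLp v 2 ν) (hcv : MemLp cv 2 ν)
    (hτ : MemLp τ 2 ν) (hcτ : MemLp cτ 2 ν)
    (hf : MemLp f 2 ν)
    (hibp : ∫ x, ⟪τ x, cv x⟫ ∂ν = ∫ x, ⟪cτ x, v x⟫ ∂ν) :
    2 * (((1 / 2) * (∫ x, ((μ x)⁻¹ * ‖cv x‖ ^ 2 + β x * ‖v x‖ ^ 2) ∂ν)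
            - ∫ x, ⟪f x, v x⟫ ∂ν)
         - (-(1 / 2) * (∫ x, μ x * ‖τ x‖ ^ 2 ∂ν)
            - (1 / 2) * (∫ x, (β x)⁻¹ * ‖f x - cτ x‖ ^ 2 ∂ν)))
    = (∫ x, (μ x)⁻¹ * ‖μ x • τ x - cv x‖ ^ 2 ∂ν)
      + (∫ x, (β x)⁻¹ * ‖cτ x + β x • v x - f x‖ ^ 2 ∂ν) := by
  have hμ_term := integral_inv_mul_norm_smul_sub_sq hm₁ hμmeas.aestronglyMeasurable hμbd hτ hcv
  have hβ_term := integral_inv_mul_norm_smul_sub_sq hb₁ hβmeas.aestronglyMeasurable hβbd hv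
    (hf.sub hcτ)
  have hcross : ∫ x, ⟪v x, f x - cτ x⟫ ∂ν = ∫ x, ⟪f x, v x⟫ ∂ν - ∫ x, ⟪cτ x, v x⟫ ∂ν := by
    simp_rw [inner_sub_right, real_inner_comm _ (v _)]
    exact integral_sub (hf.integrable_inner hv) (hcτ.integrable_inner hv)
  have henergy := integral_add
    (hcv.integrable_mul_norm_sq (w := fun x => (μ x)⁻¹) hμmeas.inv.aestronglyMeasurable
      (hμbd.mono fun x hx => (norm_le_and_norm_inv_le_of_mem_Icc hm₁ hx).2))
    (hv.integrable_mul_norm_sq hβmeas.aestronglyMeasurable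
      (hβbd.mono fun x hx => (norm_le_and_norm_inv_le_of_mem_Icc hb₁ hx).1))
  simp only [Pi.sub_apply] at hβ_term
  simp_rw [show ∀ x, cτ x + β x • v x - f x = β x • v x - (f x - cτ x) from fun x => by abel]
  rw [henergy, hμ_term, hβ_term, hcross, ← hibp]
  ring

/-- Duality identity relating the estimator to the primal and dual energy
functionals (Section 4.1): 2 (J(v) − J*(τ)) = η(v,τ)². -/
theorem duality_identity_estimator
    {Ω : Type*} [MeasurableSpace Ω] (ν : MeasureTheory.Measure Ω)
    (μ β : Ω → ℝ) (m₁ m₂ b₁ b₂ : ℝ)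
    (hm₁ : 0 < m₁) (hm₁₂ : m₁ ≤ m₂) (hb₁ : 0 < b₁) (hb₁₂ : b₁ ≤ b₂)
    (hμmeas : Measurable μ) (hβmeas : Measurable β)
    (hμbd : ∀ᵐ x ∂ν, m₁ ≤ μ x ∧ μ x ≤ m₂)
    (hβbd : ∀ᵐ x ∂ν, b₁ ≤ β x ∧ β x ≤ b₂)
    (v cv τ cτ f : Ω → EuclideanSpace ℝ (Fin 3))
    (hv : MemLp v 2 ν) (hcv : MemLp cv 2 ν)
    (hτ : MemLp τ 2 ν) (hcτ : MemLp cτ 2 ν)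
    (hf : MemLp f 2 ν)
    (hibp : ∫ x, ⟪τ x, cv x⟫ ∂ν = ∫ x, ⟪cτ x, v x⟫ ∂ν) :
    2 * (((1 / 2) * (∫ x, ((μ x)⁻¹ * ‖cv x‖ ^ 2 + β x * ‖v x‖ ^ 2) ∂ν)
            - ∫ x, ⟪f x, v x⟫ ∂ν)
         - (-(1 / 2) * (∫ x, μ x * ‖τ x‖ ^ 2 ∂ν)
            - (1 / 2) * (∫ x, (β x)⁻¹ * ‖f x - cτ x‖ ^ 2 ∂ν)))
    = (∫ x, (μ x)⁻¹ * ‖μ x • τ x - cv x‖ ^ 2 ∂ν)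
      + (∫ x, (β x)⁻¹ * ‖cτ x + β x • v x - f x‖ ^ 2 ∂ν) :=
  duality_identity_estimator_general ν μ β m₁ m₂ b₁ b₂ hm₁ hb₁ hμmeas hβmeas hμbd hβbd v cv τ cτ f
    hv hcv hτ hcτ hf hibp
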